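/- Let Q be an inverse quantal frame and X a Q-sheaf. Then every principal section s of X is a right local section: for all x ∈ X with x ≤ s one has x = s ∧ 1_Q·x. (Hence in a principal Q-sheaf the set of principal sections coincides with the set of local bisections.) -/

import Mathlib

/-- A unital involutive quantale: a complete lattice with an associative
multiplication preserving arbitrary joins in each variable, a unit `e`, and a
join-preserving involution. -/
structure QuantaleStruct (Q : Type*) [CompleteLattice Q] where
  mul : Q → Q → Q
  e : Q
  star : Q → Q
  mul_assoc : ∀ a b c, mul (mul a b) c = mul a (mul b c)
  sSup_mul : ∀ (S : Set Q) (b : Q), mul (sSup S) b = ⨆ a ∈ S, mul a b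
  mul_sSup : ∀ (a : Q) (S : Set Q), mul a (sSup S) = ⨆ b ∈ S, mul a b
  e_mul : ∀ a, mul e a = a
  mul_e : ∀ a, mul a e = a
  star_star : ∀ a, star (star a) = a
  star_mul : ∀ a b, star (mul a b) = mul (star b) (star a)
  star_sSup : ∀ S : Set Q, star (sSup S) = ⨆ a ∈ S, star a

/-- The set of partial units of a quantale. -/
def QuantaleStruct.PU {Q : Type*} [CompleteLattice Q] (Qs : QuantaleStruct Q) : Set Q :=
  {s | Qs.mul s (Qs.star s) ≤ Qs.e ∧ Qs.mul (Qs.star s) s ≤ Qs.e}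

/-- An inverse quantal frame: a unital involutive quantale which is a frame,
has a stable support, and whose partial units join to the top. -/
structure InverseQuantalFrame (Q : Type*) [Order.Frame Q] extends toQuantale : QuantaleStruct Q where
  supp : Q → Q
  supp_le_e : ∀ a, supp a ≤ e
  supp_sSup : ∀ S : Set Q, supp (sSup S) = ⨆ a ∈ S, supp a
  supp_le_mul_star : ∀ a, supp a ≤ mul a (star a)
  le_supp_mul : ∀ a, a ≤ mul (supp a) a
  supp_stable : ∀ b a, b ≤ e → supp (mul b a) = mul b (supp a)
  sSup_PU : sSup {s | mul s (star s) ≤ e ∧ mul (star s) s ≤ e} = ⊤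

/-- A left module over a quantale: a complete lattice with a unital associative
action preserving arbitrary joins in each variable. -/
structure QuantaleModule {Q : Type*} [CompleteLattice Q] (Qs : QuantaleStruct Q)
    (X : Type*) [CompleteLattice X] where
  act : Q → X → X
  act_mul : ∀ a b x, act (Qs.mul a b) x = act a (act b x)
  act_e : ∀ x, act Qs.e x = x
  sSup_act : ∀ (S : Set Q) (x : X), act (sSup S) x = ⨆ a ∈ S, act a x
  act_sSup : ∀ (a : Q) (S : Set X), act a (sSup S) = ⨆ x ∈ S, act a x

/-- A pre-Hilbert module over a quantale. -/
structure PreHilbertModule {Q : Type*} [CompleteLattice Q] (Qs : QuantaleStruct Q)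
    (X : Type*) [CompleteLattice X] extends QuantaleModule Qs X where
  inner : X → X → Q
  inner_act : ∀ a x y, inner (act a x) y = Qs.mul a (inner x y)
  sSup_inner : ∀ (S : Set X) (y : X), inner (sSup S) y = ⨆ x ∈ S, inner x y
  inner_star : ∀ x y, inner x y = Qs.star (inner y x)

namespace PreHilbertModule

variable {Q X : Type*} [CompleteLattice Q] [CompleteLattice X] {Qs : QuantaleStruct Q}

/-- A Hilbert section: `⟨x,s⟩s ≤ x` for all `x`. -/
def IsHilbertSection (H : PreHilbertModule Qs X) (s : X) : Prop :=
  ∀ x, H.act (H.inner x s) s ≤ x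

/-- A regular element: `⟨s,s⟩s = s`. -/
def IsRegularSection (H : PreHilbertModule Qs X) (s : X) : Prop :=
  H.act (H.inner s s) s = s

/-- A Hilbert basis: `x = ⋁_{t ∈ S} ⟨x,t⟩t` for all `x`. -/
def IsHilbertBasis (H : PreHilbertModule Qs X) (S : Set X) : Prop :=
  ∀ x, x = ⨆ t ∈ S, H.act (H.inner x t) t

/-- Non-degeneracy of the inner product. -/
def Nondegenerate (H : PreHilbertModule Qs X) : Prop :=
  ∀ x y, (∀ z, H.inner x z = H.inner y z) → x = y

end PreHilbertModule

/-- A `Q`-locale over an inverse quantal frame: a module which is a frame and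
satisfies the anchor condition. -/
structure QLocale {Q : Type*} [Order.Frame Q] (Qf : InverseQuantalFrame Q)
    (X : Type*) [Order.Frame X] extends QuantaleModule Qf.toQuantale X where
  anchor : ∀ b x, b ≤ Qf.e → act b x = act b ⊤ ⊓ x

/-- A `Q`-sheaf over an inverse quantal frame: a pre-Hilbert module which is a
frame, satisfies the anchor condition, and has a Hilbert basis. -/
structure QSheaf {Q : Type*} [Order.Frame Q] (Qf : InverseQuantalFrame Q)
    (X : Type*) [Order.Frame X] extends PreHilbertModule Qf.toQuantale X where
  anchor : ∀ b x, b ≤ Qf.e → act b x = act b ⊤ ⊓ x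
  hasBasis : ∃ S : Set X, ∀ x, x = ⨆ t ∈ S, act (inner x t) t

namespace QSheaf

variable {Q X : Type*} [Order.Frame Q] [Order.Frame X] {Qf : InverseQuantalFrame Q}

/-- The support `ς_X(x) = ⟨x,x⟩ ∧ e` of a `Q`-sheaf. -/
def sppX (H : QSheaf Qf X) (x : X) : Q := H.inner x x ⊓ Qf.e

/-- A local section: `ς_X(x)s = x` for all `x ≤ s`. -/
def IsLocalSection (H : QSheaf Qf X) (s : X) : Prop :=
  ∀ x ≤ s, H.act (H.sppX x) s = x

/-- A principal section: a local section with `⟨s,s⟩ ≤ e`. -/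
def IsPrincipalSection (H : QSheaf Qf X) (s : X) : Prop :=
  H.IsLocalSection s ∧ H.inner s s ≤ Qf.e

/-- A right local section: `x = s ∧ 1_Q·x` for all `x ≤ s`. -/
def IsRightLocalSection (H : QSheaf Qf X) (s : X) : Prop :=
  ∀ x ≤ s, x = s ⊓ H.act ⊤ x

/-- A local bisection: simultaneously a local section and a right local section. -/
def IsBisection (H : QSheaf Qf X) (s : X) : Prop :=
  H.IsLocalSection s ∧ H.IsRightLocalSection s

end QSheaf

/-
Since `⊤` is the join of the partial units and `X` is a frame, `s ∧ ⊤x = ⋁ₜ (s ∧ tx)`, so it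
suffices to bound `z = s ∧ tx` by `x` for a partial unit `t`. As `s` is a local section,
`z = ς(z) s`, and `ς(z) ≤ ⟨s, tx⟩ = a t*` with `a = ⟨s, x⟩`. The support axioms give `u ≤ u u*` for
`u ≤ e`, so `ς(z) ≤ a t* t a* ≤ a a*`. Finally `⟨s, s⟩ ≤ e` gives `⟨x, s⟩ ≤ ς(x)` and
`a ≤ e`, whence `a a* s = a ⟨x, s⟩ s ≤ a ς(x) s = a x ≤ x`.
-/

theorem monotone_of_map_sSup {α β : Type*} [CompleteLattice α] [CompleteLattice β] {f : α → β}
    (hf : ∀ S, f (sSup S) = ⨆ a ∈ S, f a) : Monotone f := by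
  intro a b hab
  rw [← sup_eq_right.mpr hab, ← sSup_pair, hf]
  exact le_biSup f (by simp)

namespace QuantaleStruct

variable {Q : Type*} [CompleteLattice Q] (Qs : QuantaleStruct Q)

theorem mul_le_mul {a b c d : Q} (hab : a ≤ b) (hcd : c ≤ d) : Qs.mul a c ≤ Qs.mul b d :=
  (monotone_of_map_sSup (f := (Qs.mul · c)) (Qs.sSup_mul · c) hab).trans
    (monotone_of_map_sSup (Qs.mul_sSup b) hcd)

theorem star_mono : Monotone Qs.star :=
  monotone_of_map_sSup Qs.star_sSup

theorem star_e : Qs.star Qs.e = Qs.e := by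
  simpa only [Qs.e_mul, Qs.star_star] using (Qs.star_mul Qs.e (Qs.star Qs.e)).symm

end QuantaleStruct

namespace QuantaleModule

variable {Q X : Type*} [CompleteLattice Q] [CompleteLattice X] {Qs : QuantaleStruct Q}

theorem act_le_act (M : QuantaleModule Qs X) {a b : Q} {x y : X} (hab : a ≤ b) (hxy : x ≤ y) :
    M.act a x ≤ M.act b y :=
  (monotone_of_map_sSup (f := (M.act · x)) (M.sSup_act · x) hab).trans
    (monotone_of_map_sSup (M.act_sSup b) hxy)

end QuantaleModule

namespace PreHilbertModule

variable {Q X : Type*} [CompleteLattice Q] [CompleteLattice X] {Qs : QuantaleStruct Q}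
  (H : PreHilbertModule Qs X)

theorem inner_le_inner {x y z w : X} (hxy : x ≤ y) (hzw : z ≤ w) :
    H.inner x z ≤ H.inner y w := by
  have inner_mono_left : ∀ c, Monotone (H.inner · c) :=
    fun c => monotone_of_map_sSup (f := (H.inner · c)) (H.sSup_inner · c)
  calc H.inner x z ≤ H.inner y z := inner_mono_left z hxy
    _ = Qs.star (H.inner z y) := H.inner_star y z
    _ ≤ Qs.star (H.inner w y) := Qs.star_mono (inner_mono_left y hzw)
    _ = H.inner y w := (H.inner_star y w).symm

theorem inner_act_right (a : Q) (x y : X) :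
    H.inner x (H.act a y) = Qs.mul (H.inner x y) (Qs.star a) := by
  rw [H.inner_star, H.inner_act, Qs.star_mul, ← H.inner_star]

end PreHilbertModule

namespace InverseQuantalFrame

variable {Q : Type*} [Order.Frame Q] (Qf : InverseQuantalFrame Q)

theorem le_mul_star {b : Q} (hb : b ≤ Qf.e) : b ≤ Qf.mul b (Qf.star b) :=
  calc b ≤ Qf.mul (Qf.supp b) b := Qf.le_supp_mul b
    _ ≤ Qf.mul (Qf.mul b (Qf.star b)) Qf.e := Qf.mul_le_mul (Qf.supp_le_mul_star b) hb
    _ = Qf.mul b (Qf.star b) := Qf.mul_e _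

theorem le_mul_star_of_le_mul_star {a t u : Q} (hu : u ≤ Qf.e)
    (ht : Qf.mul (Qf.star t) t ≤ Qf.e) (h : u ≤ Qf.mul a (Qf.star t)) :
    u ≤ Qf.mul a (Qf.star a) :=
  calc u ≤ Qf.mul u (Qf.star u) := Qf.le_mul_star hu
    _ ≤ Qf.mul (Qf.mul a (Qf.star t)) (Qf.star (Qf.mul a (Qf.star t))) :=
        Qf.mul_le_mul h (Qf.star_mono h)
    _ = Qf.mul a (Qf.mul (Qf.mul (Qf.star t) t) (Qf.star a)) := by
        rw [Qf.star_mul, Qf.star_star, Qf.mul_assoc, ← Qf.mul_assoc (Qf.star t),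
          Qf.mul_assoc (Qf.star t)]
    _ ≤ Qf.mul a (Qf.mul Qf.e (Qf.star a)) := Qf.mul_le_mul le_rfl (Qf.mul_le_mul ht le_rfl)
    _ = Qf.mul a (Qf.star a) := by rw [Qf.e_mul]

end InverseQuantalFrame

namespace QSheaf

variable {Q X : Type*} [Order.Frame Q] [Order.Frame X] {Qf : InverseQuantalFrame Q}
  (H : QSheaf Qf X) {s x : X}

theorem inner_le_sppX (hs : H.IsPrincipalSection s) (hx : x ≤ s) :
    H.inner x s ≤ H.sppX x :=
  calc H.inner x s = Qf.mul (H.sppX x) (H.inner s s) := by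
        conv_lhs => rw [← hs.1 x hx]
        exact H.inner_act _ _ _
    _ ≤ Qf.mul (H.sppX x) Qf.e := Qf.mul_le_mul le_rfl hs.2
    _ = H.sppX x := Qf.mul_e _

theorem act_inner_mul_star_inner_le (hs : H.IsPrincipalSection s) (hx : x ≤ s) :
    H.act (Qf.mul (H.inner s x) (Qf.star (H.inner s x))) s ≤ x := by
  have hxs : H.inner x s ≤ H.sppX x := H.inner_le_sppX hs hx
  have hsx : H.inner s x ≤ Qf.e :=
    calc H.inner s x = Qf.star (H.inner x s) := H.inner_star s x
      _ ≤ Qf.star Qf.e := Qf.star_mono (hxs.trans inf_le_right)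
      _ = Qf.e := Qf.star_e
  calc H.act (Qf.mul (H.inner s x) (Qf.star (H.inner s x))) s
        = H.act (H.inner s x) (H.act (H.inner x s) s) := by
          rw [← H.inner_star, H.act_mul]
    _ ≤ H.act Qf.e (H.act (H.sppX x) s) := H.act_le_act hsx (H.act_le_act hxs le_rfl)
    _ = x := by rw [H.act_e, hs.1 x hx]

theorem inf_act_le (hs : H.IsPrincipalSection s) (hx : x ≤ s) {t : Q}
    (ht : Qf.mul (Qf.star t) t ≤ Qf.e) : s ⊓ H.act t x ≤ x := by
  set z := s ⊓ H.act t x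
  have hz : H.sppX z ≤ Qf.mul (H.inner s x) (Qf.star t) :=
    calc H.sppX z ≤ H.inner z z := inf_le_left
      _ ≤ H.inner s (H.act t x) := H.inner_le_inner inf_le_left inf_le_right
      _ = Qf.mul (H.inner s x) (Qf.star t) := H.inner_act_right t s x
  calc z = H.act (H.sppX z) s := (hs.1 z inf_le_left).symm
    _ ≤ H.act (Qf.mul (H.inner s x) (Qf.star (H.inner s x))) s :=
        H.act_le_act (Qf.le_mul_star_of_le_mul_star inf_le_right ht hz) le_rfl
    _ ≤ x := H.act_inner_mul_star_inner_le hs hx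

end QSheaf

/-- Every principal section of a `Q`-sheaf is a right local
section: `x = s ∧ 1_Q·x` for all `x ≤ s`. -/
theorem stmt15 {Q X : Type*} [Order.Frame Q] [Order.Frame X]
    (Qf : InverseQuantalFrame Q) (H : QSheaf Qf X)
    (s : X) (hs : H.IsPrincipalSection s) :
    H.IsRightLocalSection s := by
  intro x hx
  refine le_antisymm (le_inf hx ?_) ?_
  · calc x = H.act Qf.e x := (H.act_e x).symm
      _ ≤ H.act ⊤ x := H.act_le_act le_top le_rfl
  · rw [← Qf.sSup_PU, H.sSup_act, inf_iSup₂_eq]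
    exact iSup₂_le fun t ht => H.inf_act_le hs hx ht.2
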